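/- Let n ∈ ℕ, let \tilde{R}_n be a symmetrized Hammersley type point set with N = 2^{n+2} points (for an arbitrary fixed choice function σ), and let D be its local discrepancy function. For every k ∈ ℕ₀ with k < n and every m ∈ {0,…,2^k−1}, the Haar coefficients with one index equal to −1 vanish: μ_{(−1,k),(0,m)}(D) = ∫_{[0,1)^2} D(t)·h_{k,m}(t2) dt = 0 and μ_{(k,−1),(m,0)}(D) = ∫_{[0,1)^2} D(t)·h_{k,m}(t1) dt = 0. -/

import Mathlib

open MeasureTheory Set

/-- The L∞-normalized Haar function `h_{j,m}` on `[0,1)`: it is `+1` on the left half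
`[2m/2^{j+1}, (2m+1)/2^{j+1})` of the dyadic interval `I_{j,m}`, `-1` on the right half
`[(2m+1)/2^{j+1}, (2m+2)/2^{j+1})`, and `0` elsewhere. -/
noncomputable def haar (j m : ℕ) (t : ℝ) : ℝ :=
  if (2 * m : ℝ) / 2 ^ (j + 1) ≤ t ∧ t < (2 * m + 1 : ℝ) / 2 ^ (j + 1) then 1
  else if (2 * m + 1 : ℝ) / 2 ^ (j + 1) ≤ t ∧ t < (2 * m + 2 : ℝ) / 2 ^ (j + 1) then -1
  else 0

/-- First coordinate of a point of the Hammersley type point set: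
`t_n/2 + t_{n-1}/2^2 + ⋯ + t_1/2^n`, where the index `i : Fin n` corresponds to `t_{i+1}`,
so the digit `t i` gets divided by `2^{n - i}`. -/
noncomputable def hamX (n : ℕ) (t : Fin n → Bool) : ℝ :=
  ∑ i : Fin n, (if t i then (1 : ℝ) else 0) / 2 ^ (n - i.val)

/-- Second coordinate of a point of the Hammersley type point set:
`s_1/2 + s_2/2^2 + ⋯ + s_n/2^n` with `s_i = t_i` if `σ i = false` and `s_i = 1 - t_i`
if `σ i = true`, i.e. `s_i = t_i XOR σ i`. -/
noncomputable def hamY (n : ℕ) (σ : Fin n → Bool) (t : Fin n → Bool) : ℝ :=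
  ∑ i : Fin n, (if (t i).xor (σ i) then (1 : ℝ) else 0) / 2 ^ (i.val + 1)

/-- The points of the symmetrized Hammersley type multiset `R̃_n`, parametrized by a digit
vector `t` and two reflection bits: `(x,y)`, `(x,1-y)`, `(1-x,y)`, `(1-x,1-y)`. -/
noncomputable def symPoint (n : ℕ) (σ : Fin n → Bool) (z : (Fin n → Bool) × Bool × Bool) :
    ℝ × ℝ :=
  (if z.2.1 then 1 - hamX n z.1 else hamX n z.1,
   if z.2.2 then 1 - hamY n σ z.1 else hamY n σ z.1)

/-- The local discrepancy function of the symmetrized Hammersley type multiset `R̃_n`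
with `N = 2^{n+2}` points counted with multiplicity. -/
noncomputable def discSym (n : ℕ) (σ : Fin n → Bool) (t1 t2 : ℝ) : ℝ :=
  (∑ z : (Fin n → Bool) × Bool × Bool,
      if (symPoint n σ z).1 < t1 ∧ (symPoint n σ z).2 < t2 then (1 : ℝ) else 0) / 2 ^ (n + 2)
    - t1 * t2

/-!
Integrating the local discrepancy of a finite point family in `[0,1]²` over one variable leaves
`(1/N) ∑ 1[p₁ < t₁] (1 - p₂) - t₁/2`. In the symmetrized set every point comes with its
reflection in the other coordinate, so the weights `1 - p₂` and `p₂` add up to one, and each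
coordinate of the Hammersley set runs once through the grid `{j/2ⁿ}`. Both marginals of the
discrepancy are therefore `c(t)/2^(n+2) - t/2`, with `c(t)` the number of points of the grid and
of the reflected grid below `t`. On the open cell `(j/2ⁿ, (j+1)/2ⁿ)` we have `c(t) = 2j+1`, so the
marginal is half the signed distance from `t` to the midpoint of the cell, while `h_{k,m}` is
constant on the cell as `k < n`: every cell contributes zero. For the coefficient with
`h_{k,m}(t₂)` Fubini lets us integrate in `t₁` first.
-/

lemma integral_mul_midpoint_sub (a b c : ℝ) : ∫ t in a..b, c * ((a + b) / 2 - t) = 0 := by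
  rw [intervalIntegral.integral_const_mul,
    intervalIntegral.integral_sub intervalIntegrable_const intervalIntegral.intervalIntegrable_id,
    intervalIntegral.integral_const, integral_id, smul_eq_mul]
  ring

lemma setIntegral_Ico_eq_zero_of_midpoint_cells {N : ℕ} (hN : 0 < N) {g : ℝ → ℝ}
    (hg : ∀ j < N, ∃ c : ℝ, ∀ t ∈ Ioo ((j : ℝ) / N) ((j + 1) / N),
      g t = c * (((j : ℝ) / N + (j + 1) / N) / 2 - t)) :
    ∫ t in Ico (0 : ℝ) 1, g t = 0 := by
  let a : ℕ → ℝ := fun j => j / N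
  have hcell : ∀ j < N, IntervalIntegrable g volume (a j) (a (j + 1)) ∧
      ∫ t in a j..a (j + 1), g t = 0 := by
    intro j hj
    obtain ⟨c, hc⟩ := hg j hj
    have hle : a j ≤ a (j + 1) := by simp only [a]; gcongr; simp
    have heq : EqOn g (fun t => c * ((a j + a (j + 1)) / 2 - t)) (uIoo (a j) (a (j + 1))) := by
      rw [uIoo_of_le hle]
      intro t ht
      simp only [a, Nat.cast_succ] at ht ⊢
      exact hc t ht
    refine ⟨(Continuous.intervalIntegrable (by fun_prop) _ _).congr_uIoo heq.symm, ?_⟩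
    rw [intervalIntegral.integral_congr_uIoo heq, integral_mul_midpoint_sub]
  have ha0 : a 0 = 0 := by simp [a]
  have haN : a N = 1 := by simp [a, hN.ne']
  calc ∫ t in Ico (0 : ℝ) 1, g t = ∫ t in a 0..a N, g t := by
        rw [ha0, haN, intervalIntegral.integral_of_le zero_le_one, integral_Ico_eq_integral_Ioc]
    _ = ∑ j ∈ Finset.range N, ∫ t in a j..a (j + 1), g t :=
        (intervalIntegral.sum_integral_adjacent_intervals fun j hj => (hcell j hj).1).symm
    _ = 0 := Finset.sum_eq_zero fun j hj => (hcell j (Finset.mem_range.1 hj)).2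

def binaryEquiv (n : ℕ) : (Fin n → Bool) ≃ Fin (2 ^ n) :=
  (Equiv.arrowCongr (Equiv.refl _) finTwoEquiv.symm).trans finFunctionFinEquiv

lemma binaryEquiv_val (n : ℕ) (u : Fin n → Bool) :
    (binaryEquiv n u : ℕ) = ∑ i : Fin n, (u i).toNat * 2 ^ (i : ℕ) := by
  simp only [binaryEquiv, Equiv.trans_apply, finFunctionFinEquiv_apply]
  refine Finset.sum_congr rfl fun i _ => ?_
  cases h : u i <;> simp [Equiv.arrowCongr, finTwoEquiv, h]

lemma hamX_eq (n : ℕ) (t : Fin n → Bool) : hamX n t = (binaryEquiv n t : ℕ) / 2 ^ n := by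
  rw [hamX, binaryEquiv_val, Nat.cast_sum, Finset.sum_div]
  refine Finset.sum_congr rfl fun i _ => ?_
  have hpow : (2 : ℝ) ^ n = 2 ^ (n - i) * 2 ^ (i : ℕ) := by
    rw [← pow_add, Nat.sub_add_cancel i.2.le]
  rw [hpow, Nat.cast_mul, Nat.cast_pow, Nat.cast_ofNat, mul_div_mul_right _ _ (by positivity)]
  cases t i <;> simp

lemma hamY_eq (n : ℕ) (σ t : Fin n → Bool) :
    hamY n σ t = (binaryEquiv n (fun i => (t i.rev).xor (σ i.rev)) : ℕ) / 2 ^ n := by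
  rw [hamY, binaryEquiv_val, Nat.cast_sum, Finset.sum_div]
  conv_rhs => rw [← Equiv.sum_comp Fin.revPerm]
  refine Finset.sum_congr rfl fun i _ => ?_
  have hpow : (2 : ℝ) ^ n = 2 ^ (i + 1 : ℕ) * 2 ^ (i.rev : ℕ) := by
    rw [← pow_add, Fin.val_rev]; congr 1; omega
  rw [hpow, Fin.revPerm_apply, Fin.rev_rev, Nat.cast_mul, Nat.cast_pow, Nat.cast_ofNat,
    mul_div_mul_right _ _ (by positivity)]
  cases (t i).xor (σ i) <;> simp

lemma sum_comp_hamX {M : Type*} [AddCommMonoid M] (n : ℕ) (f : ℝ → M) :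
    ∑ t : Fin n → Bool, f (hamX n t) = ∑ j ∈ Finset.range (2 ^ n), f (j / 2 ^ n) := by
  simp_rw [hamX_eq, ← Fin.sum_univ_eq_sum_range (fun j => f (j / 2 ^ n))]
  exact (binaryEquiv n).sum_comp (fun j => f ((j : ℕ) / 2 ^ n))

lemma sum_comp_hamY {M : Type*} [AddCommMonoid M] (n : ℕ) (σ : Fin n → Bool) (f : ℝ → M) :
    ∑ t : Fin n → Bool, f (hamY n σ t) = ∑ j ∈ Finset.range (2 ^ n), f (j / 2 ^ n) := by
  let flip : (Fin n → Bool) ≃ (Fin n → Bool) :=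
    { toFun := fun t i => (t i.rev).xor (σ i.rev)
      invFun := fun u i => (u i.rev).xor (σ i)
      left_inv := fun t => by funext i; simp
      right_inv := fun u => by funext i; simp }
  simp_rw [hamY_eq, ← Fin.sum_univ_eq_sum_range (fun j => f (j / 2 ^ n))]
  exact (flip.trans (binaryEquiv n)).sum_comp (fun j => f ((j : ℕ) / 2 ^ n))

section LocalDiscrepancy

variable {ι : Type*} [Fintype ι]

noncomputable def localDisc (p : ι → ℝ × ℝ) (t₁ t₂ : ℝ) : ℝ :=
  (∑ i, if (p i).1 < t₁ ∧ (p i).2 < t₂ then (1 : ℝ) else 0) / Fintype.card ι - t₁ * t₂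

lemma localDisc_eq_sum_mul (p : ι → ℝ × ℝ) (t₁ t₂ : ℝ) :
    localDisc p t₁ t₂ = (∑ i, (if (p i).1 < t₁ then (1 : ℝ) else 0) *
      (if (p i).2 < t₂ then 1 else 0)) / Fintype.card ι - t₁ * t₂ := by
  simp only [localDisc, ite_zero_mul_ite_zero, one_mul]

lemma localDisc_swap (p : ι → ℝ × ℝ) (t₁ t₂ : ℝ) :
    localDisc (Prod.swap ∘ p) t₂ t₁ = localDisc p t₁ t₂ := by
  simp only [localDisc, Function.comp_apply, Prod.fst_swap, Prod.snd_swap, and_comm, mul_comm]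

lemma ite_lt_eq_indicator (y : ℝ) :
    (fun t : ℝ => if y < t then (1 : ℝ) else 0) = (Ioi y).indicator 1 := by
  ext t; simp [indicator_apply]

lemma integrableOn_ite_lt (y : ℝ) :
    IntegrableOn (fun t : ℝ => if y < t then (1 : ℝ) else 0) (Ico 0 1) := by
  rw [ite_lt_eq_indicator]
  exact (integrableOn_const measure_Ico_lt_top.ne).indicator measurableSet_Ioi

lemma setIntegral_Ico_ite_lt {y : ℝ} (hy : y ∈ Icc (0 : ℝ) 1) :
    ∫ t in Ico (0 : ℝ) 1, (if y < t then (1 : ℝ) else 0) = 1 - y := by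
  have hset : Ico (0 : ℝ) 1 ∩ Ioi y = Ioo y 1 := by
    ext t; simp only [mem_inter_iff, mem_Ico, mem_Ioi, mem_Ioo]
    constructor
    · rintro ⟨⟨-, ht1⟩, hyt⟩; exact ⟨hyt, ht1⟩
    · rintro ⟨hyt, ht1⟩; exact ⟨⟨hy.1.trans hyt.le, ht1⟩, hyt⟩
  rw [ite_lt_eq_indicator, setIntegral_indicator measurableSet_Ioi, hset]
  simp [Real.volume_real_Ioo_of_le hy.2]

lemma integrableOn_Ico_id : IntegrableOn (fun t : ℝ => t) (Ico 0 1) :=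
  (continuous_id.integrableOn_Icc).mono_set Ico_subset_Icc_self

lemma setIntegral_Ico_id : ∫ t in Ico (0 : ℝ) 1, t = 1 / 2 := by
  rw [integral_Ico_eq_integral_Ioc, ← intervalIntegral.integral_of_le zero_le_one]
  norm_num

lemma integral_localDisc_right (p : ι → ℝ × ℝ) (hp : ∀ i, (p i).2 ∈ Icc (0 : ℝ) 1) (t₁ : ℝ) :
    ∫ t₂ in Ico (0 : ℝ) 1, localDisc p t₁ t₂ =
      (∑ i, (if (p i).1 < t₁ then (1 : ℝ) else 0) * (1 - (p i).2)) / Fintype.card ι - t₁ / 2 := by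
  have hterm : ∀ i, IntegrableOn (fun t₂ => (if (p i).1 < t₁ then (1 : ℝ) else 0) *
      (if (p i).2 < t₂ then 1 else 0)) (Ico 0 1) :=
    fun i => (integrableOn_ite_lt _).const_mul _
  simp_rw [localDisc_eq_sum_mul]
  rw [integral_sub ((integrable_finsetSum _ fun i _ => hterm i).div_const _)
      (integrableOn_Ico_id.const_mul t₁), integral_div, integral_finsetSum _ fun i _ => hterm i,
    integral_const_mul, setIntegral_Ico_id]
  simp_rw [integral_const_mul, setIntegral_Ico_ite_lt (hp _)]
  ring

lemma integral_localDisc_left (p : ι → ℝ × ℝ) (hp : ∀ i, (p i).1 ∈ Icc (0 : ℝ) 1) (t₂ : ℝ) :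
    ∫ t₁ in Ico (0 : ℝ) 1, localDisc p t₁ t₂ =
      (∑ i, (if (p i).2 < t₂ then (1 : ℝ) else 0) * (1 - (p i).1)) / Fintype.card ι - t₂ / 2 := by
  simpa only [localDisc_swap, Function.comp_apply, Prod.fst_swap, Prod.snd_swap] using
    integral_localDisc_right (Prod.swap ∘ p) hp t₂

lemma integrable_localDisc_mul_right (p : ι → ℝ × ℝ) {h : ℝ → ℝ} (hh : IntegrableOn h (Ico 0 1)) :
    Integrable (Function.uncurry fun t₁ t₂ => localDisc p t₁ t₂ * h t₂)
      ((volume.restrict (Ico (0 : ℝ) 1)).prod (volume.restrict (Ico (0 : ℝ) 1))) := by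
  have hcut : ∀ y : ℝ, IntegrableOn (fun t => (if y < t then (1 : ℝ) else 0) * h t) (Ico 0 1) := by
    intro y
    have hind : (fun t => (if y < t then (1 : ℝ) else 0) * h t) = (Ioi y).indicator h := by
      ext t; by_cases hyt : y < t <;> simp [hyt]
    exact hind ▸ hh.indicator measurableSet_Ioi
  have hid : IntegrableOn (fun t => t * h t) (Ico 0 1) :=
    hh.bdd_mul (c := 1) measurable_id.aestronglyMeasurable
      (ae_restrict_of_forall_mem measurableSet_Ico fun t ht => by
        rw [Real.norm_eq_abs, abs_le]; exact ⟨by linarith [ht.1], ht.2.le⟩)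
  have hsum := (integrable_finsetSum Finset.univ fun i _ =>
    (integrableOn_ite_lt (p i).1).mul_prod (hcut (p i).2)).div_const (Fintype.card ι : ℝ)
  refine (hsum.sub (integrableOn_Ico_id.mul_prod hid)).congr
    (Filter.Eventually.of_forall fun t => ?_)
  simp only [Function.uncurry, localDisc_eq_sum_mul, Pi.sub_apply, sub_mul,
    Finset.sum_div, Finset.sum_mul, div_mul_eq_mul_div, mul_assoc]

end LocalDiscrepancy

noncomputable def symGridCount (n : ℕ) (t : ℝ) : ℝ :=
  ∑ j ∈ Finset.range (2 ^ n),
    ((if (j : ℝ) / 2 ^ n < t then 1 else 0) + (if 1 - (j : ℝ) / 2 ^ n < t then 1 else 0))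

lemma card_symIndex (n : ℕ) : (Fintype.card ((Fin n → Bool) × Bool × Bool) : ℝ) = 2 ^ (n + 2) := by
  simp only [Fintype.card_prod, Fintype.card_fun, Fintype.card_bool, Fintype.card_fin]
  push_cast
  ring

lemma discSym_eq_localDisc (n : ℕ) (σ : Fin n → Bool) : discSym n σ = localDisc (symPoint n σ) := by
  ext t₁ t₂
  rw [discSym, localDisc, card_symIndex]

lemma binaryEquiv_div_mem_Icc (n : ℕ) (u : Fin n → Bool) :
    ((binaryEquiv n u : ℕ) : ℝ) / 2 ^ n ∈ Icc (0 : ℝ) 1 := by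
  refine ⟨by positivity, (div_le_one (by positivity)).2 ?_⟩
  exact_mod_cast (binaryEquiv n u).2.le

lemma reflect_mem_Icc {x : ℝ} (hx : x ∈ Icc (0 : ℝ) 1) (b : Bool) :
    (if b then 1 - x else x) ∈ Icc (0 : ℝ) 1 := by
  cases b
  · exact hx
  · exact ⟨sub_nonneg.2 hx.2, sub_le_self 1 hx.1⟩

lemma symPoint_fst_mem (n : ℕ) (σ : Fin n → Bool) (z : (Fin n → Bool) × Bool × Bool) :
    (symPoint n σ z).1 ∈ Icc (0 : ℝ) 1 :=
  reflect_mem_Icc (hamX_eq n z.1 ▸ binaryEquiv_div_mem_Icc n _) z.2.1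

lemma symPoint_snd_mem (n : ℕ) (σ : Fin n → Bool) (z : (Fin n → Bool) × Bool × Bool) :
    (symPoint n σ z).2 ∈ Icc (0 : ℝ) 1 :=
  reflect_mem_Icc (hamY_eq n σ z.1 ▸ binaryEquiv_div_mem_Icc n _) z.2.2

lemma sum_reflect_mul_reflect (x y t : ℝ) :
    ∑ b : Bool × Bool, (if (if b.1 then 1 - x else x) < t then (1 : ℝ) else 0) *
      (1 - if b.2 then 1 - y else y) = (if x < t then 1 else 0) + (if 1 - x < t then 1 else 0) := by
  simp only [Fintype.sum_prod_type, Fintype.sum_bool, if_true, Bool.false_eq_true, if_false]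
  ring

lemma sum_symPoint_fst (n : ℕ) (σ : Fin n → Bool) (t : ℝ) :
    ∑ z, (if (symPoint n σ z).1 < t then (1 : ℝ) else 0) * (1 - (symPoint n σ z).2) =
      symGridCount n t := by
  rw [Fintype.sum_prod_type]
  simp only [symPoint, sum_reflect_mul_reflect]
  exact sum_comp_hamX n fun x => (if x < t then (1 : ℝ) else 0) + (if 1 - x < t then 1 else 0)

lemma sum_symPoint_snd (n : ℕ) (σ : Fin n → Bool) (t : ℝ) :
    ∑ z, (if (symPoint n σ z).2 < t then (1 : ℝ) else 0) * (1 - (symPoint n σ z).1) =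
      symGridCount n t := by
  rw [symGridCount, Fintype.sum_prod_type,
    ← sum_comp_hamY n σ fun y => (if y < t then (1 : ℝ) else 0) + (if 1 - y < t then 1 else 0)]
  refine Finset.sum_congr rfl fun u _ => ?_
  rw [← (Equiv.prodComm Bool Bool).sum_comp]
  exact sum_reflect_mul_reflect _ _ _

lemma intCast_div_lt_iff {N t : ℝ} (hN : 0 < N) {j : ℕ} (ht : t ∈ Ioo ((j : ℝ) / N) ((j + 1) / N))
    (a : ℤ) : (a : ℝ) / N < t ↔ a ≤ j := by
  rw [div_lt_iff₀ hN]
  have hlow : (j : ℝ) < t * N := (div_lt_iff₀ hN).1 ht.1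
  have hhigh : t * N < j + 1 := (lt_div_iff₀ hN).1 ht.2
  constructor
  · intro h
    have : (a : ℝ) < (j : ℤ) + 1 := by push_cast; linarith
    exact_mod_cast Int.lt_add_one_iff.1 (by exact_mod_cast this)
  · intro h
    have : (a : ℝ) ≤ (j : ℤ) := by exact_mod_cast h
    push_cast at this
    linarith

lemma symGridCount_eq_of_mem_Ioo {n j : ℕ} (hj : j < 2 ^ n) {t : ℝ}
    (ht : t ∈ Ioo ((j : ℝ) / 2 ^ n) ((j + 1) / 2 ^ n)) : symGridCount n t = 2 * j + 1 := by
  have hN : (0 : ℝ) < 2 ^ n := by positivity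
  have hlow : ∀ i : ℕ, (i : ℝ) / 2 ^ n < t ↔ i ≤ j := fun i => by
    simpa using intCast_div_lt_iff hN ht i
  have hhigh : ∀ i : ℕ, 1 - (i : ℝ) / 2 ^ n < t ↔ 2 ^ n ≤ i + j := fun i => by
    have hcast : 1 - (i : ℝ) / 2 ^ n = ((2 ^ n - i : ℤ) : ℝ) / 2 ^ n := by
      push_cast; field_simp
    rw [hcast, intCast_div_lt_iff hN ht]
    zify
    omega
  have hfilter_low : (Finset.range (2 ^ n)).filter (· ≤ j) = Finset.range (j + 1) := by
    ext i; simp only [Finset.mem_filter, Finset.mem_range]; omega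
  have hfilter_high :
      (Finset.range (2 ^ n)).filter (2 ^ n ≤ · + j) = Finset.Ico (2 ^ n - j) (2 ^ n) := by
    ext i; simp only [Finset.mem_filter, Finset.mem_range, Finset.mem_Ico]; omega
  simp only [symGridCount, hlow, hhigh, Finset.sum_add_distrib, Finset.sum_boole, hfilter_low,
    hfilter_high, Finset.card_range, Nat.card_Ico, Nat.sub_sub_self hj.le]
  push_cast
  ring

lemma haar_eq_ite_floor (k m : ℕ) (t : ℝ) :
    haar k m t = if ⌊2 ^ (k + 1) * t⌋ = 2 * m then 1
      else if ⌊2 ^ (k + 1) * t⌋ = 2 * m + 1 then -1 else 0 := by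
  have hpos : (0 : ℝ) < 2 ^ (k + 1) := by positivity
  have hcell : ∀ a : ℤ, ((a : ℝ) / 2 ^ (k + 1) ≤ t ∧ t < ((a : ℝ) + 1) / 2 ^ (k + 1)) ↔
      ⌊2 ^ (k + 1) * t⌋ = a := by
    intro a
    rw [Int.floor_eq_iff, div_le_iff₀ hpos, lt_div_iff₀ hpos, mul_comm t]
  have h0 := hcell (2 * m)
  have h1 := hcell (2 * m + 1)
  push_cast at h0 h1
  rw [show (2 * m + 1 : ℝ) + 1 = 2 * m + 2 by ring] at h1
  simp only [haar, h0, h1]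

lemma haar_eq_of_floor_eq {k n : ℕ} (hk : k < n) (m : ℕ) {s t : ℝ}
    (h : ⌊2 ^ n * s⌋ = ⌊2 ^ n * t⌋) : haar k m s = haar k m t := by
  have hfloor : ∀ x : ℝ, ⌊2 ^ (k + 1) * x⌋ = ⌊2 ^ n * x⌋ / (2 ^ (n - (k + 1)) : ℕ) := by
    intro x
    have hpow : (2 : ℝ) ^ n = 2 ^ (n - (k + 1)) * 2 ^ (k + 1) := by
      rw [← pow_add, Nat.sub_add_cancel hk]
    rw [← Int.floor_div_natCast, hpow]
    push_cast
    field_simp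
  rw [haar_eq_ite_floor, haar_eq_ite_floor, hfloor, hfloor, h]

lemma haar_eq_of_mem_Ioo {k n : ℕ} (hk : k < n) (m j : ℕ) {t : ℝ}
    (ht : t ∈ Ioo ((j : ℝ) / 2 ^ n) ((j + 1) / 2 ^ n)) : haar k m t = haar k m (j / 2 ^ n) := by
  have hpos : (0 : ℝ) < 2 ^ n := by positivity
  refine haar_eq_of_floor_eq hk m ?_
  rw [mul_div_cancel₀ _ hpos.ne', Int.floor_natCast, Int.floor_eq_iff]
  constructor
  · push_cast; linarith [(div_lt_iff₀' hpos).1 ht.1]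
  · push_cast; linarith [(lt_div_iff₀' hpos).1 ht.2]

lemma integrableOn_haar (k m : ℕ) : IntegrableOn (haar k m) (Ico 0 1) := by
  refine .of_bound measure_Ico_lt_top ?_ 1 (Filter.Eventually.of_forall fun t => ?_)
  · refine Measurable.aestronglyMeasurable ?_
    exact Measurable.ite measurableSet_Ico measurable_const
      (Measurable.ite measurableSet_Ico measurable_const measurable_const)
  · unfold haar; split_ifs <;> simp

lemma setIntegral_symGridCount_mul_haar {k n : ℕ} (hk : k < n) (m : ℕ) :
    ∫ t in Ico (0 : ℝ) 1, (symGridCount n t / 2 ^ (n + 2) - t / 2) * haar k m t = 0 := by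
  refine setIntegral_Ico_eq_zero_of_midpoint_cells (N := 2 ^ n) (by positivity)
    fun j hj => ⟨haar k m (j / 2 ^ n) / 2, fun t ht => ?_⟩
  push_cast at ht ⊢
  rw [symGridCount_eq_of_mem_Ioo hj ht, haar_eq_of_mem_Ioo hk m j ht]
  field_simp
  ring

lemma integral_discSym_right (n : ℕ) (σ : Fin n → Bool) (t₁ : ℝ) :
    ∫ t₂ in Ico (0 : ℝ) 1, discSym n σ t₁ t₂ = symGridCount n t₁ / 2 ^ (n + 2) - t₁ / 2 := by
  rw [discSym_eq_localDisc, integral_localDisc_right _ (symPoint_snd_mem n σ), sum_symPoint_fst,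
    card_symIndex]

lemma integral_discSym_left (n : ℕ) (σ : Fin n → Bool) (t₂ : ℝ) :
    ∫ t₁ in Ico (0 : ℝ) 1, discSym n σ t₁ t₂ = symGridCount n t₂ / 2 ^ (n + 2) - t₂ / 2 := by
  rw [discSym_eq_localDisc, integral_localDisc_left _ (symPoint_fst_mem n σ), sum_symPoint_snd,
    card_symIndex]

theorem disc_haar_coeff_neg_vanish_general (n : ℕ) (σ : Fin n → Bool) (k m : ℕ)
    (hk : k < n) :
    (∫ t1 in Set.Ico (0 : ℝ) 1, ∫ t2 in Set.Ico (0 : ℝ) 1,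
      discSym n σ t1 t2 * haar k m t2) = 0 ∧
    (∫ t1 in Set.Ico (0 : ℝ) 1, ∫ t2 in Set.Ico (0 : ℝ) 1,
      discSym n σ t1 t2 * haar k m t1) = 0 := by
  constructor
  · rw [integral_integral_swap (discSym_eq_localDisc n σ ▸
      integrable_localDisc_mul_right (symPoint n σ) (integrableOn_haar k m))]
    simp_rw [integral_mul_const, integral_discSym_left]
    exact setIntegral_symGridCount_mul_haar hk m
  · simp_rw [integral_mul_const, integral_discSym_right]
    exact setIntegral_symGridCount_mul_haar hk m

/-- Proposition (iv): for the local discrepancy `D` of the symmetrized Hammersley type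
multiset `R̃_n`, the Haar coefficients `μ_{(-1,k),(0,m)}(D)` and `μ_{(k,-1),(m,0)}(D)`
vanish for all `k < n` and `m ∈ {0,…,2^k-1}`. -/
theorem disc_haar_coeff_neg_vanish (n : ℕ) (σ : Fin n → Bool) (k m : ℕ)
    (hk : k < n) (hm : m < 2 ^ k) :
    (∫ t1 in Set.Ico (0 : ℝ) 1, ∫ t2 in Set.Ico (0 : ℝ) 1,
      discSym n σ t1 t2 * haar k m t2) = 0 ∧
    (∫ t1 in Set.Ico (0 : ℝ) 1, ∫ t2 in Set.Ico (0 : ℝ) 1,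
      discSym n σ t1 t2 * haar k m t1) = 0 :=
  disc_haar_coeff_neg_vanish_general n σ k m hk
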